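/- arXiv:2307.07450 — 2 statements merged into one kernel-verified Lean document; each statement's English description precedes it below -/
import Mathlib

section
/- At each of the two points (π, arccos((√5−1)/2), π − (1/2)·arctan(2√(2+√5))) and (0, arccos((√5−1)/2), (1/2)·arctan(2√(2+√5))), the gradient of L₁ vanishes, L₁ takes the value 1/4, and the Hessian matrix of L₁ has both a strictly positive and a strictly negative eigenvalue; hence these points are saddle points of L₁. -/
open Matrix

/-- The kinematic landscape function `L₁(Ω,β₁,β₂)`. -/
noncomputable def L1 (Ω β₁ β₂ : ℝ) : ℝ :=
  (1/8) * Real.sin β₂ ^ 2 * (3 + Real.cos (2*β₁))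
  + (1/2) * Real.sin β₁ ^ 2 * Real.cos β₂ ^ 2
  - (1/2) * Real.cos Ω * Real.sin β₁ * Real.sin (β₁/2) ^ 2 * Real.sin (2*β₂)

/-- `L₁` as a function on `ℝ³`. -/
noncomputable def L1v (v : Fin 3 → ℝ) : ℝ := L1 (v 0) (v 1) (v 2)

/-- Hessian matrix of second partial derivatives of `f : ℝⁿ → ℝ` at `p`. -/
noncomputable def hessian {n : ℕ} (f : (Fin n → ℝ) → ℝ) (p : Fin n → ℝ) :
    Matrix (Fin n) (Fin n) ℝ :=
  Matrix.of fun i j => fderiv ℝ (fun y => fderiv ℝ f y (Pi.single j 1)) p (Pi.single i 1)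

/-!
Replacing `sin² β₂`, `cos² β₂`, `sin² β₁` and `sin² (β₁/2)` by double angles gives
`L₁ = (5 - cos 2β₁ - cos 2β₂ - 3 cos 2β₁ cos 2β₂) / 16 - cos Ω (2 sin β₁ - sin 2β₁) sin 2β₂ / 8`,
whose partial derivatives are again short trigonometric polynomials. At both points
`sin Ω = 0`, `cos β₁ = a`, `sin β₁ = √a`, `cos 2β₂ = 2a - 1` and `sin 2β₂ = 2a√a cos Ω`, where
`a = (√5 - 1)/2` is the positive root of `a² + a = 1`; the gradient and the value then reduce to polynomial
identities modulo that equation.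

The Hessian of the smooth function `L₁` is symmetric, and its diagonal entries are
`∂²L₁/∂Ω² = a²(1 - a)/2 > 0` and `∂²L₁/∂β₁² = a - 1 < 0`. A symmetric matrix with diagonal entries
of both signs is neither positive nor negative semidefinite, so by the spectral theorem it has an
eigenvalue of each sign.
-/

section

variable {n : ℕ} {f : (Fin n → ℝ) → ℝ} {p : Fin n → ℝ}

theorem fderiv_apply_single_eq_deriv_update (hf : DifferentiableAt ℝ f p) (j : Fin n) :
    fderiv ℝ f p (Pi.single j 1) = deriv (fun t => f (Function.update p j t)) (p j) :=
  (hf.hasFDerivAt.comp_hasDerivAt_of_eq (p j) (hasDerivAt_update p j (p j))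
    (Function.update_eq_self j p).symm).deriv.symm

theorem fderiv_eq_zero_of_apply_single (h : ∀ j, fderiv ℝ f p (Pi.single j 1) = 0) :
    fderiv ℝ f p = 0 := by
  refine ContinuousLinearMap.coe_injective (LinearMap.pi_ext fun j x => ?_)
  rw [← mul_one x, ← smul_eq_mul, Pi.single_smul']
  simp [h j]

theorem hessian_apply_eq_fderiv_fderiv (hf : ContDiffAt ℝ 2 f p) (i j : Fin n) :
    hessian f p i j = fderiv ℝ (fderiv ℝ f) p (Pi.single i 1) (Pi.single j 1) := by
  have hdf : DifferentiableAt ℝ (fderiv ℝ f) p :=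
    (hf.fderiv_right (m := 1) le_rfl).differentiableAt one_ne_zero
  simp [hessian, fderiv_clm_apply hdf (differentiableAt_const _)]

theorem isHermitian_hessian (hf : ContDiffAt ℝ 2 f p) : (hessian f p).IsHermitian := by
  have hsymm := hf.isSymmSndFDerivAt (by simp)
  ext i j
  simp [hessian_apply_eq_fderiv_fderiv hf, hsymm.eq]

theorem hessian_apply_self (hf : ContDiffAt ℝ 2 f p) (i : Fin n) :
    hessian f p i i =
      deriv (fun t => fderiv ℝ f (Function.update p i t) (Pi.single i 1)) (p i) := by
  have hdf : DifferentiableAt ℝ (fderiv ℝ f) p :=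
    (hf.fderiv_right (m := 1) le_rfl).differentiableAt one_ne_zero
  exact fderiv_apply_single_eq_deriv_update (hdf.clm_apply (differentiableAt_const _)) i

end

namespace Matrix.IsHermitian

variable {n : Type*} [Fintype n] [DecidableEq n] {A : Matrix n n ℝ}

theorem exists_neg_eigenvalue_of_diag_neg (hA : A.IsHermitian) {i : n} (hi : A i i < 0) :
    ∃ (c : ℝ) (v : n → ℝ), c < 0 ∧ v ≠ 0 ∧ A *ᵥ v = c • v := by
  by_contra! h
  have hpsd : A.PosSemidef := hA.posSemidef_iff_eigenvalues_nonneg.mpr fun k => by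
    by_contra! hk
    refine h _ _ hk ?_ (hA.mulVec_eigenvectorBasis k)
    simpa using (hA.eigenvectorBasis.orthonormal.ne_zero k)
  exact hi.not_ge hpsd.diag_nonneg

theorem exists_pos_eigenvalue_of_diag_pos (hA : A.IsHermitian) {i : n} (hi : 0 < A i i) :
    ∃ (c : ℝ) (v : n → ℝ), 0 < c ∧ v ≠ 0 ∧ A *ᵥ v = c • v := by
  obtain ⟨c, v, hc, hv, hAv⟩ := hA.neg.exists_neg_eigenvalue_of_diag_neg (i := i) (by simpa using hi)
  exact ⟨-c, v, neg_pos.mpr hc, hv, by rw [neg_smul, ← hAv, neg_mulVec, neg_neg]⟩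

end Matrix.IsHermitian

open Real

theorem hasDerivAt_sin_two_mul (x : ℝ) :
    HasDerivAt (fun x => sin (2 * x)) (2 * cos (2 * x)) x := by
  simpa [mul_comm] using ((hasDerivAt_id' x).const_mul 2).sin

theorem hasDerivAt_cos_two_mul (x : ℝ) :
    HasDerivAt (fun x => cos (2 * x)) (-(2 * sin (2 * x))) x := by
  simpa [mul_comm] using ((hasDerivAt_id' x).const_mul 2).cos

theorem L1_eq_double_angle (Ω β₁ β₂ : ℝ) :
    L1 Ω β₁ β₂ = (5 - cos (2 * β₁) - cos (2 * β₂) - 3 * cos (2 * β₁) * cos (2 * β₂)) / 16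
      - cos Ω * (2 * sin β₁ - sin (2 * β₁)) * sin (2 * β₂) / 8 := by
  have h₁ := sin_sq_add_cos_sq β₁
  have h₂ := sin_sq_add_cos_sq β₂
  have hhalf : sin (β₁ / 2) ^ 2 = (1 - cos β₁) / 2 := by
    have h := cos_two_mul (β₁ / 2)
    rw [show 2 * (β₁ / 2) = β₁ by ring] at h
    linear_combination sin_sq_add_cos_sq (β₁ / 2) + h / 2
  rw [L1, hhalf, cos_two_mul, cos_two_mul, sin_two_mul, sin_two_mul]
  linear_combination (1 / 4 * (1 + cos β₁ ^ 2)) * h₂ + (1 / 2 * cos β₂ ^ 2) * h₁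

noncomputable def L1dΩ (Ω β₁ β₂ : ℝ) : ℝ :=
  sin Ω * (2 * sin β₁ - sin (2 * β₁)) * sin (2 * β₂) / 8

noncomputable def L1dβ₁ (Ω β₁ β₂ : ℝ) : ℝ :=
  sin (2 * β₁) * (1 + 3 * cos (2 * β₂)) / 8 - cos Ω * (cos β₁ - cos (2 * β₁)) * sin (2 * β₂) / 4

noncomputable def L1dβ₂ (Ω β₁ β₂ : ℝ) : ℝ :=
  sin (2 * β₂) * (1 + 3 * cos (2 * β₁)) / 8
    - cos Ω * (2 * sin β₁ - sin (2 * β₁)) * cos (2 * β₂) / 4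

section

variable (Ω β₁ β₂ : ℝ)

theorem hasDerivAt_L1_Ω : HasDerivAt (fun Ω => L1 Ω β₁ β₂) (L1dΩ Ω β₁ β₂) Ω := by
  simp only [L1_eq_double_angle, L1dΩ]
  refine (((((hasDerivAt_cos Ω).mul_const (2 * sin β₁ - sin (2 * β₁))).mul_const
    (sin (2 * β₂))).div_const 8).const_sub _).congr_deriv (by ring)

theorem hasDerivAt_L1_β₁ : HasDerivAt (fun β₁ => L1 Ω β₁ β₂) (L1dβ₁ Ω β₁ β₂) β₁ := by
  simp only [L1_eq_double_angle, L1dβ₁]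
  have hc := hasDerivAt_cos_two_mul β₁
  have hs := ((hasDerivAt_sin β₁).const_mul 2).fun_sub (hasDerivAt_sin_two_mul β₁)
  refine (((((hc.const_sub 5).fun_sub (hasDerivAt_const β₁ (cos (2 * β₂)))).fun_sub
    ((hc.const_mul 3).mul_const (cos (2 * β₂)))).div_const 16).fun_sub
    (((hs.const_mul (cos Ω)).mul_const (sin (2 * β₂))).div_const 8)).congr_deriv (by ring)

theorem hasDerivAt_L1_β₂ : HasDerivAt (fun β₂ => L1 Ω β₁ β₂) (L1dβ₂ Ω β₁ β₂) β₂ := by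
  simp only [L1_eq_double_angle, L1dβ₂]
  have hc := hasDerivAt_cos_two_mul β₂
  have hs := (hasDerivAt_sin_two_mul β₂).const_mul (cos Ω * (2 * sin β₁ - sin (2 * β₁)))
  refine ((((hc.const_sub (5 - cos (2 * β₁))).fun_sub
    (hc.const_mul (3 * cos (2 * β₁)))).div_const 16).fun_sub (hs.div_const 8)).congr_deriv
    (by ring)

theorem hasDerivAt_L1dΩ_Ω :
    HasDerivAt (fun Ω => L1dΩ Ω β₁ β₂)
      (cos Ω * (2 * sin β₁ - sin (2 * β₁)) * sin (2 * β₂) / 8) Ω :=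
  (((hasDerivAt_sin Ω).mul_const _).mul_const _).div_const 8

theorem hasDerivAt_L1dβ₁_β₁ :
    HasDerivAt (fun β₁ => L1dβ₁ Ω β₁ β₂)
      (cos (2 * β₁) * (1 + 3 * cos (2 * β₂)) / 4
        + cos Ω * (sin β₁ - 2 * sin (2 * β₁)) * sin (2 * β₂) / 4) β₁ := by
  simp only [L1dβ₁]
  have hc := (hasDerivAt_cos β₁).fun_sub (hasDerivAt_cos_two_mul β₁)
  refine ((((hasDerivAt_sin_two_mul β₁).mul_const (1 + 3 * cos (2 * β₂))).div_const 8).fun_sub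
    (((hc.const_mul (cos Ω)).mul_const (sin (2 * β₂))).div_const 4)).congr_deriv (by ring)

end

theorem contDiff_L1v : ContDiff ℝ 2 L1v := by
  unfold L1v L1
  fun_prop

theorem fderiv_L1v_single_zero (y : Fin 3 → ℝ) :
    fderiv ℝ L1v y (Pi.single 0 1) = L1dΩ (y 0) (y 1) (y 2) := by
  rw [fderiv_apply_single_eq_deriv_update (contDiff_L1v.differentiable two_ne_zero y)]
  simpa [L1v, Function.update] using (hasDerivAt_L1_Ω (y 0) (y 1) (y 2)).deriv

theorem fderiv_L1v_single_one (y : Fin 3 → ℝ) :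
    fderiv ℝ L1v y (Pi.single 1 1) = L1dβ₁ (y 0) (y 1) (y 2) := by
  rw [fderiv_apply_single_eq_deriv_update (contDiff_L1v.differentiable two_ne_zero y)]
  simpa [L1v, Function.update] using (hasDerivAt_L1_β₁ (y 0) (y 1) (y 2)).deriv

theorem fderiv_L1v_single_two (y : Fin 3 → ℝ) :
    fderiv ℝ L1v y (Pi.single 2 1) = L1dβ₂ (y 0) (y 1) (y 2) := by
  rw [fderiv_apply_single_eq_deriv_update (contDiff_L1v.differentiable two_ne_zero y)]
  simpa [L1v, Function.update] using (hasDerivAt_L1_β₂ (y 0) (y 1) (y 2)).deriv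

theorem hessian_L1v_zero_zero (p : Fin 3 → ℝ) :
    hessian L1v p 0 0 = cos (p 0) * (2 * sin (p 1) - sin (2 * p 1)) * sin (2 * p 2) / 8 := by
  rw [hessian_apply_self contDiff_L1v.contDiffAt]
  simpa [fderiv_L1v_single_zero, Function.update] using
    (hasDerivAt_L1dΩ_Ω (p 0) (p 1) (p 2)).deriv

theorem hessian_L1v_one_one (p : Fin 3 → ℝ) :
    hessian L1v p 1 1 = cos (2 * p 1) * (1 + 3 * cos (2 * p 2)) / 4
        + cos (p 0) * (sin (p 1) - 2 * sin (2 * p 1)) * sin (2 * p 2) / 4 := by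
  rw [hessian_apply_self contDiff_L1v.contDiffAt]
  simpa [fderiv_L1v_single_one, Function.update] using
    (hasDerivAt_L1dβ₁_β₁ (p 0) (p 1) (p 2)).deriv

section

variable {Ω β₁ β₂ a r : ℝ}

theorem L1_eq_one_div_four (ha : a ^ 2 + a = 1) (hr : r ^ 2 = a) (hΩ : cos Ω ^ 2 = 1)
    (hc₁ : cos β₁ = a) (hs₁ : sin β₁ = r) (hc₂ : cos (2 * β₂) = 2 * a - 1)
    (hs₂ : sin (2 * β₂) = 2 * a * r * cos Ω) :
    L1 Ω β₁ β₂ = 1 / 4 := by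
  rw [L1_eq_double_angle, hc₂, hs₂, sin_two_mul, cos_two_mul, hc₁, hs₁]
  linear_combination (-a / 4) * ha - (a * (1 - a) * r ^ 2 / 2) * hΩ - (a * (1 - a) / 2) * hr

theorem L1dβ₁_eq_zero (ha : a ^ 2 + a = 1) (hΩ : cos Ω ^ 2 = 1)
    (hc₁ : cos β₁ = a) (hs₁ : sin β₁ = r) (hc₂ : cos (2 * β₂) = 2 * a - 1)
    (hs₂ : sin (2 * β₂) = 2 * a * r * cos Ω) :
    L1dβ₁ Ω β₁ β₂ = 0 := by
  rw [L1dβ₁, hc₂, hs₂, sin_two_mul, cos_two_mul, hc₁, hs₁]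
  linear_combination (a * r) * ha - (a * r * (a - 2 * a ^ 2 + 1) / 2) * hΩ

theorem L1dβ₂_eq_zero (ha : a ^ 2 + a = 1)
    (hc₁ : cos β₁ = a) (hs₁ : sin β₁ = r) (hc₂ : cos (2 * β₂) = 2 * a - 1)
    (hs₂ : sin (2 * β₂) = 2 * a * r * cos Ω) :
    L1dβ₂ Ω β₁ β₂ = 0 := by
  rw [L1dβ₂, hc₂, hs₂, sin_two_mul, cos_two_mul, hc₁, hs₁]
  linear_combination (r * cos Ω * (6 * a - 2) / 4) * ha

end

section

variable {p : Fin 3 → ℝ} {a r : ℝ}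

theorem hessian_L1v_zero_zero_pos (ha : a ^ 2 + a = 1) (hr : r ^ 2 = a)
    (hΩ : cos (p 0) ^ 2 = 1) (hc₁ : cos (p 1) = a) (hs₁ : sin (p 1) = r)
    (hs₂ : sin (2 * p 2) = 2 * a * r * cos (p 0)) :
    0 < hessian L1v p 0 0 := by
  have h : hessian L1v p 0 0 = a ^ 2 * (1 - a) / 2 := by
    rw [hessian_L1v_zero_zero, hs₂, sin_two_mul, hc₁, hs₁]
    linear_combination (a * (1 - a) * r ^ 2 / 2) * hΩ + (a * (1 - a) / 2) * hr
  have ha₀ : a ≠ 0 := by rintro rfl; norm_num at ha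
  have ha₁ : 0 < 1 - a := by nlinarith
  rw [h]
  positivity

theorem hessian_L1v_one_one_neg (ha : a ^ 2 + a = 1) (hr : r ^ 2 = a)
    (hΩ : cos (p 0) ^ 2 = 1) (hc₁ : cos (p 1) = a) (hs₁ : sin (p 1) = r)
    (hc₂ : cos (2 * p 2) = 2 * a - 1) (hs₂ : sin (2 * p 2) = 2 * a * r * cos (p 0)) :
    hessian L1v p 1 1 < 0 := by
  have h : hessian L1v p 1 1 = a - 1 := by
    rw [hessian_L1v_one_one, hc₂, hs₂, sin_two_mul, cos_two_mul, hc₁, hs₁]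
    linear_combination ((2 * a - 3) / 2) * ha + (a * (1 - 4 * a) * r ^ 2 / 2) * hΩ
      + (a * (1 - 4 * a) / 2) * hr
  rw [h]
  nlinarith

end

theorem one_lt_sqrt_five : 1 < √5 := by
  rw [lt_sqrt zero_le_one]; norm_num

theorem sqrt_five_sub_one_div_two_sq_add_self : ((√5 - 1) / 2) ^ 2 + (√5 - 1) / 2 = 1 := by
  linear_combination (sq_sqrt (show (0 : ℝ) ≤ 5 by norm_num)) / 4

theorem cos_arctan_two_mul_sqrt_two_add_sqrt_five :
    cos (arctan (2 * √(2 + √5))) = 2 * ((√5 - 1) / 2) - 1 := by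
  have h5 : √5 ^ 2 = 5 := sq_sqrt (by norm_num)
  have h1 : 1 + (2 * √(2 + √5)) ^ 2 = (2 + √5) ^ 2 := by
    rw [mul_pow, sq_sqrt (by positivity)]
    linear_combination -h5
  rw [cos_arctan, h1, sqrt_sq (by positivity), div_eq_iff (by positivity)]
  linear_combination -h5

theorem sin_arctan_two_mul_sqrt_two_add_sqrt_five :
    sin (arctan (2 * √(2 + √5))) = 2 * ((√5 - 1) / 2) * √((√5 - 1) / 2) := by
  have h5 : √5 ^ 2 = 5 := sq_sqrt (by norm_num)
  have h1 := one_lt_sqrt_five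
  have hr : √((√5 - 1) / 2) ^ 2 = (√5 - 1) / 2 := sq_sqrt (by linarith)
  have hrhs : 0 ≤ 2 * ((√5 - 1) / 2) * √((√5 - 1) / 2) :=
    mul_nonneg (by linarith) (sqrt_nonneg _)
  refine (sq_eq_sq₀ (sin_arctan_nonneg.2 (by positivity)) hrhs).1 ?_
  rw [sin_sq, cos_arctan_two_mul_sqrt_two_add_sqrt_five, mul_pow, hr]
  linear_combination (-(√5 - 1) / 2) * h5

theorem trig_values_at_saddle_points {p : Fin 3 → ℝ}
    (hp : p = ![π, arccos ((√5 - 1) / 2), π - (1 / 2) * arctan (2 * √(2 + √5))]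
      ∨ p = ![0, arccos ((√5 - 1) / 2), (1 / 2) * arctan (2 * √(2 + √5))]) :
    sin (p 0) = 0 ∧ cos (p 0) ^ 2 = 1 ∧ cos (p 1) = (√5 - 1) / 2
      ∧ sin (p 1) = √((√5 - 1) / 2) ∧ cos (2 * p 2) = 2 * ((√5 - 1) / 2) - 1
      ∧ sin (2 * p 2) = 2 * ((√5 - 1) / 2) * √((√5 - 1) / 2) * cos (p 0) := by
  have h1 := one_lt_sqrt_five
  have h5 : √5 ^ 2 = 5 := sq_sqrt (by norm_num)
  have hcos₁ : cos (arccos ((√5 - 1) / 2)) = (√5 - 1) / 2 :=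
    cos_arccos (by linarith) (by nlinarith)
  have hsin₁ : sin (arccos ((√5 - 1) / 2)) = √((√5 - 1) / 2) := by
    rw [sin_arccos, show 1 - ((√5 - 1) / 2) ^ 2 = (√5 - 1) / 2 by
      linear_combination -sqrt_five_sub_one_div_two_sq_add_self]
  have hcos₂ := cos_arctan_two_mul_sqrt_two_add_sqrt_five
  have hsin₂ := sin_arctan_two_mul_sqrt_two_add_sqrt_five
  rcases hp with rfl | rfl <;>
    simp only [Matrix.cons_val_zero, Matrix.cons_val_one, Matrix.cons_val_two, Matrix.head_cons,
      Matrix.tail_cons, hcos₁, hsin₁]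
  · rw [show 2 * (π - 1 / 2 * arctan (2 * √(2 + √5))) = -arctan (2 * √(2 + √5)) + 2 * π by ring,
      cos_add_two_pi, sin_add_two_pi, cos_neg, sin_neg, hcos₂, hsin₂, sin_pi, cos_pi]
    norm_num
  · rw [show 2 * (1 / 2 * arctan (2 * √(2 + √5))) = arctan (2 * √(2 + √5)) by ring,
      hcos₂, hsin₂, sin_zero, cos_zero]
    norm_num

open Real in
/-- at the two listed points the gradient of L₁ vanishes, L₁ = 1/4, and the Hessian has both a strictly positive and a strictly negative eigenvalue: these are saddle points. -/
theorem stmt7 (p : Fin 3 → ℝ)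
    (hp : p = ![π, arccos ((Real.sqrt 5 - 1)/2), π - (1/2) * arctan (2 * Real.sqrt (2 + Real.sqrt 5))]
      ∨ p = ![0, arccos ((Real.sqrt 5 - 1)/2), (1/2) * arctan (2 * Real.sqrt (2 + Real.sqrt 5))]) :
    -- the gradient of L₁ vanishes at p
    fderiv ℝ L1v p = 0
    -- L₁ takes the value 1/4 at p
    ∧ L1v p = 1/4
    -- the Hessian has a strictly positive eigenvalue
    ∧ (∃ (c : ℝ) (v : Fin 3 → ℝ), 0 < c ∧ v ≠ 0 ∧ (hessian L1v p).mulVec v = c • v)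
    -- and a strictly negative eigenvalue (hence p is a saddle point)
    ∧ (∃ (c : ℝ) (v : Fin 3 → ℝ), c < 0 ∧ v ≠ 0 ∧ (hessian L1v p).mulVec v = c • v) := by
  obtain ⟨hs₀, hc₀, hc₁, hs₁, hc₂, hs₂⟩ := trig_values_at_saddle_points hp
  have ha := sqrt_five_sub_one_div_two_sq_add_self
  have hr : √((√5 - 1) / 2) ^ 2 = (√5 - 1) / 2 := sq_sqrt (by linarith [one_lt_sqrt_five])
  have hH := isHermitian_hessian (p := p) contDiff_L1v.contDiffAt
  refine ⟨fderiv_eq_zero_of_apply_single fun j => ?_,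
    L1_eq_one_div_four ha hr hc₀ hc₁ hs₁ hc₂ hs₂,
    hH.exists_pos_eigenvalue_of_diag_pos (hessian_L1v_zero_zero_pos ha hr hc₀ hc₁ hs₁ hs₂),
    hH.exists_neg_eigenvalue_of_diag_neg (hessian_L1v_one_one_neg ha hr hc₀ hc₁ hs₁ hc₂ hs₂)⟩
  fin_cases j
  · simp [fderiv_L1v_single_zero, L1dΩ, hs₀]
  · exact (fderiv_L1v_single_one p).trans (L1dβ₁_eq_zero ha hc₀ hc₁ hs₁ hc₂ hs₂)
  · exact (fderiv_L1v_single_two p).trans (L1dβ₂_eq_zero ha hc₁ hs₁ hc₂ hs₂)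
end

section
/- At each of the two points (π, arccos((1−√6)/5), (1/2)·arccos(1/(1+√6))) and (0, arccos((1−√6)/5), π − (1/2)·arccos(1/(1+√6))), the gradient of L₁ vanishes, L₁ takes the value (3/50)·(9+√6), and the Hessian matrix of L₁ is negative definite; hence these points are strict local (in fact global) maxima of L₁. -/
open Matrix

/-!
Write `x = cos β₁`, `s = sin β₁`, `t = cos 2β₂`, `u = sin 2β₂`, `c = cos Ω`; then
`L₁ = (3 - x²)/8 + (1 - 3x²) t/8 - c s (1 - x) u/4`. With `M = (3/50)(9 + √6)` and
`N = M - (3 - x²)/8 > 0` one has, on `x² + s² = 1`, `t² + u² = 1`, the identity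
`2N (M - L₁) = N (1 - x)/2 · (|su| + csu) + (N t - (1 - 3x²)/8)² + (N |u| - (1 - x)|s|/4)²
  + (5x - 1 + √6)² q(x)/10000`,
where `q(x) = 13 + 32√6 + (10√6 - 60) x - 25x² > 0` on `[-1, 1]`. So `M` is the global maximum
of `L₁`, attained exactly when `x = (1 - √6)/5`, `t = (√6 - 1)/5` and `csu = -|su|`. At such a
point `|sin β₁|` and `|sin 2β₂|` exceed `2/5`, so these conditions determine `β₁`, `2β₂` and then
`Ω` among nearby points: maximisers are isolated. The gradient vanishes at a maximum, and the
Hessian is computed in the same variables.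
-/

open Real

theorem sqrt_six_sq : √6 ^ 2 = 6 := sq_sqrt (by norm_num)

theorem two_le_sqrt_six : 2 ≤ √6 := by nlinarith [sqrt_six_sq, sqrt_nonneg 6]

theorem sqrt_six_le_three : √6 ≤ 3 := by nlinarith [sqrt_six_sq, sqrt_nonneg 6]

theorem one_div_one_add_sqrt_six : 1 / (1 + √6) = (√6 - 1) / 5 := by
  rw [div_eq_div_iff (by positivity) (by norm_num)]
  linear_combination -sqrt_six_sq

noncomputable def L1Poly (c x s t u : ℝ) : ℝ :=
  (3 - x ^ 2) / 8 + (1 - 3 * x ^ 2) / 8 * t - c * s * (1 - x) * u / 4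

theorem L1_eq_L1Poly (Ω β₁ β₂ : ℝ) :
    L1 Ω β₁ β₂ = L1Poly (cos Ω) (cos β₁) (sin β₁) (cos (2 * β₂)) (sin (2 * β₂)) := by
  have half : sin (β₁ / 2) ^ 2 = (1 - cos β₁) / 2 := by
    have h := cos_sq (β₁ / 2)
    rw [show 2 * (β₁ / 2) = β₁ by ring] at h
    linarith [sin_sq_add_cos_sq (β₁ / 2)]
  rw [L1, L1Poly, half, sin_sq β₂, cos_sq β₂, sin_sq β₁, cos_two_mul β₁]
  ring

theorem L1v_eq_L1Poly (y : Fin 3 → ℝ) :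
    L1v y = L1Poly (cos (y 0)) (cos (y 1)) (sin (y 1)) (cos (2 * y 2)) (sin (2 * y 2)) :=
  L1_eq_L1Poly _ _ _

theorem two_mul_sub_L1Poly_eq {c x s t u N : ℝ} (hxs : x ^ 2 + s ^ 2 = 1)
    (htu : t ^ 2 + u ^ 2 = 1) (hN : N = 3 / 50 * (9 + √6) - (3 - x ^ 2) / 8) :
    2 * N * (3 / 50 * (9 + √6) - L1Poly c x s t u) =
      N * (1 - x) / 2 * (|s * u| + c * s * u) + (N * t - (1 - 3 * x ^ 2) / 8) ^ 2
        + (N * |u| - (1 - x) * |s| / 4) ^ 2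
        + (5 * x - 1 + √6) ^ 2 * (13 + 32 * √6 + (10 * √6 - 60) * x - 25 * x ^ 2) / 10000 := by
  have hs : |s| ^ 2 = 1 - x ^ 2 := by rw [sq_abs]; linarith
  have hu : |u| ^ 2 = 1 - t ^ 2 := by rw [sq_abs]; linarith
  subst hN
  rw [abs_mul, L1Poly]
  linear_combination (-(3 / 50 * (9 + √6) - (3 - x ^ 2) / 8) ^ 2) * hu - (1 - x) ^ 2 / 16 * hs
    + (87 - 240 * x - 75 * x ^ 2 - 32 * √6 - 10 * √6 * x) / 10000 * sqrt_six_sq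

theorem L1Poly_gap_terms_nonneg {c x s u : ℝ} (hc : |c| ≤ 1) (hxs : x ^ 2 + s ^ 2 = 1) :
    0 < 3 / 50 * (9 + √6) - (3 - x ^ 2) / 8 ∧ 0 ≤ 1 - x ∧ 0 ≤ |s * u| + c * s * u ∧
      0 < 13 + 32 * √6 + (10 * √6 - 60) * x - 25 * x ^ 2 := by
  have hx : x ≤ 1 := by nlinarith [sq_nonneg s, sq_nonneg (x - 1)]
  have hr := two_le_sqrt_six
  refine ⟨by nlinarith [sq_nonneg x], by linarith, ?_, ?_⟩
  · have : |c * (s * u)| ≤ |s * u| := by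
      rw [abs_mul]; exact mul_le_of_le_one_left (abs_nonneg _) hc
    rw [mul_assoc]; linarith [neg_abs_le (c * (s * u))]
  · nlinarith [mul_nonneg (sub_nonneg.2 sqrt_six_le_three) (sub_nonneg.2 hx), sq_nonneg s]

theorem L1Poly_le {c x s t u : ℝ} (hc : |c| ≤ 1) (hxs : x ^ 2 + s ^ 2 = 1)
    (htu : t ^ 2 + u ^ 2 = 1) : L1Poly c x s t u ≤ 3 / 50 * (9 + √6) := by
  set N := 3 / 50 * (9 + √6) - (3 - x ^ 2) / 8 with hN
  obtain ⟨hN0, hx, hcsu, hq⟩ := L1Poly_gap_terms_nonneg (u := u) hc hxs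
  have h : 0 ≤ 2 * N * (3 / 50 * (9 + √6) - L1Poly c x s t u) := by
    rw [two_mul_sub_L1Poly_eq hxs htu hN]; positivity
  exact sub_nonneg.1 ((mul_nonneg_iff_of_pos_left (by positivity)).1 h)

theorem L1Poly_eq_max_iff {c x s t u : ℝ} (hc : |c| ≤ 1) (hxs : x ^ 2 + s ^ 2 = 1)
    (htu : t ^ 2 + u ^ 2 = 1) :
    L1Poly c x s t u = 3 / 50 * (9 + √6) ↔
      x = (1 - √6) / 5 ∧ t = (√6 - 1) / 5 ∧ c * s * u = -|s * u| := by
  set N := 3 / 50 * (9 + √6) - (3 - x ^ 2) / 8 with hN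
  obtain ⟨hN0, hx, hcsu, hq⟩ := L1Poly_gap_terms_nonneg (u := u) hc hxs
  have h := two_mul_sub_L1Poly_eq (c := c) hxs htu hN
  have hr := sqrt_six_sq
  constructor
  · intro hmax
    rw [hmax, sub_self, mul_zero] at h
    have hT1 : 0 ≤ N * (1 - x) / 2 * (|s * u| + c * s * u) := mul_nonneg (by positivity) hcsu
    have hT2 := sq_nonneg (N * t - (1 - 3 * x ^ 2) / 8)
    have hT3 := sq_nonneg (N * |u| - (1 - x) * |s| / 4)
    have hT4 : 0 ≤ (5 * x - 1 + √6) ^ 2 * (13 + 32 * √6 + (10 * √6 - 60) * x - 25 * x ^ 2)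
        / 10000 := by positivity
    have hx' : x = (1 - √6) / 5 := by
      have e4 : (5 * x - 1 + √6) ^ 2 * (13 + 32 * √6 + (10 * √6 - 60) * x - 25 * x ^ 2)
          / 10000 = 0 := by linarith
      rw [div_eq_zero_iff, mul_eq_zero, pow_eq_zero_iff two_ne_zero] at e4
      rcases e4 with (e4 | e4) | e4
      · linarith
      · exact absurd e4 hq.ne'
      · norm_num at e4
    have hNx : N = (4 + √6) / 20 := by rw [hN, hx']; linear_combination (1 / 200) * hr
    refine ⟨hx', ?_, ?_⟩
    · have e2 : N * t - (1 - 3 * x ^ 2) / 8 = 0 := pow_eq_zero_iff two_ne_zero |>.1 (by linarith)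
      rw [hNx, hx'] at e2
      have : (4 + √6) * (t - (√6 - 1) / 5) = 0 := by
        linear_combination 20 * e2 - 1 / 2 * hr
      linarith [(mul_eq_zero.1 this).resolve_left (by positivity)]
    · have e1 : N * (1 - x) / 2 * (|s * u| + c * s * u) = 0 := by linarith
      have hpos : 0 < N * (1 - x) / 2 := by rw [hNx, hx']; nlinarith [two_le_sqrt_six]
      linarith [(mul_eq_zero.1 e1).resolve_left hpos.ne']
  · rintro ⟨rfl, rfl, hcsu'⟩
    have habs : |u| = |s| := sq_eq_sq_iff_abs_eq_abs _ _ |>.1 (by linear_combination htu - hxs)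
    have h1 : N * ((√6 - 1) / 5) - (1 - 3 * ((1 - √6) / 5) ^ 2) / 8 = 0 := by
      rw [hN]; linear_combination ((√6 + 24) / 1000) * hr
    have h2 : N * |s| - (1 - (1 - √6) / 5) * |s| / 4 = 0 := by
      rw [hN]; linear_combination (|s| / 200) * hr
    rw [hcsu', habs, h1, h2, add_neg_cancel, show 5 * ((1 - √6) / 5) - 1 + √6 = 0 by ring] at h
    norm_num at h
    linarith [h.resolve_left hN0.ne']

theorem L1v_le (y : Fin 3 → ℝ) : L1v y ≤ 3 / 50 * (9 + √6) := by
  rw [L1v_eq_L1Poly]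
  exact L1Poly_le (abs_cos_le_one _) (cos_sq_add_sin_sq _) (cos_sq_add_sin_sq _)

theorem L1v_eq_max_iff (y : Fin 3 → ℝ) :
    L1v y = 3 / 50 * (9 + √6) ↔
      cos (y 1) = (1 - √6) / 5 ∧ cos (2 * y 2) = (√6 - 1) / 5 ∧
        cos (y 0) * sin (y 1) * sin (2 * y 2) = -|sin (y 1) * sin (2 * y 2)| := by
  rw [L1v_eq_L1Poly]
  exact L1Poly_eq_max_iff (abs_cos_le_one _) (cos_sq_add_sin_sq _) (cos_sq_add_sin_sq _)

theorem eq_of_sq_eq_of_abs_sub_lt {a b : ℝ} (h : a ^ 2 = b ^ 2) (hab : |a - b| < |b|) : a = b := by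
  refine (sq_eq_sq_iff_eq_or_eq_neg.1 h).resolve_right fun hneg => ?_
  rw [hneg, show -b - b = -(2 * b) by ring, abs_neg, abs_mul, abs_two] at hab
  linarith [abs_nonneg b]

theorem eq_of_cos_eq_of_sin_eq {a b : ℝ} (hc : cos a = cos b) (hs : sin a = sin b)
    (hab : |a - b| < 2 * π) : a = b := by
  have h : cos (a - b) = 1 := by rw [cos_sub, hc, hs, ← sq, ← sq, cos_sq_add_sin_sq]
  rw [abs_lt] at hab
  linarith [(cos_eq_one_iff_of_lt_of_lt hab.1 hab.2).1 h]

theorem eq_of_cos_eq_of_abs_sub_lt_abs_sin {a b : ℝ} (hc : cos a = cos b)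
    (hab : |a - b| < |sin b|) : a = b := by
  have hs : sin a = sin b :=
    eq_of_sq_eq_of_abs_sub_lt (by rw [sin_sq, sin_sq, hc]) ((abs_sin_sub_sin_le a b).trans_lt hab)
  exact eq_of_cos_eq_of_sin_eq hc hs
    (hab.trans_le ((abs_sin_le_one b).trans (by linarith [pi_gt_three])))

theorem eq_of_cos_mul_eq_neg_abs {a b K : ℝ} (hK : K ≠ 0) (ha : cos a * K = -|K|)
    (hb : cos b * K = -|K|) (hab : |a - b| < 2 * π) : a = b := by
  have hc : cos a = cos b := mul_right_cancel₀ hK (ha.trans hb.symm)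
  have hb1 : cos b ^ 2 = 1 := by
    have := congrArg (· ^ 2) hb
    simp only [mul_pow, neg_sq, sq_abs] at this
    exact (mul_eq_right₀ (pow_ne_zero 2 hK)).1 this
  have hsb : sin b = 0 := by rw [← sq_eq_zero_iff, sin_sq, hb1, sub_self]
  have hsa : sin a = 0 := by rw [← sq_eq_zero_iff, sin_sq, hc, hb1, sub_self]
  exact eq_of_cos_eq_of_sin_eq hc (hsa.trans hsb.symm) hab

theorem eq_of_L1v_eq_max_of_dist_lt {y p : Fin 3 → ℝ} (hy : L1v y = 3 / 50 * (9 + √6))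
    (hp : L1v p = 3 / 50 * (9 + √6)) (hyp : dist y p < 1 / 5) : y = p := by
  obtain ⟨hy1, hy2, hy0⟩ := (L1v_eq_max_iff y).1 hy
  obtain ⟨hp1, hp2, hp0⟩ := (L1v_eq_max_iff p).1 hp
  have hclose (i : Fin 3) : |y i - p i| < 1 / 5 := by
    rw [← Real.dist_eq]; exact (dist_le_pi_dist y p i).trans_lt hyp
  have hsin {θ : ℝ} (hθ : cos θ ^ 2 = ((√6 - 1) / 5) ^ 2) : 2 / 5 < |sin θ| := by
    have : (2 / 5) ^ 2 < |sin θ| ^ 2 := by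
      rw [sq_abs, sin_sq, hθ]; nlinarith [two_le_sqrt_six, sqrt_six_le_three]
    exact lt_of_pow_lt_pow_left₀ 2 (abs_nonneg _) this
  have hs1 : 2 / 5 < |sin (p 1)| := hsin (by rw [hp1]; ring)
  have hs2 : 2 / 5 < |sin (2 * p 2)| := hsin (by rw [hp2])
  have h1 : y 1 = p 1 :=
    eq_of_cos_eq_of_abs_sub_lt_abs_sin (hy1.trans hp1.symm) (by linarith [hclose 1])
  have h2 : 2 * y 2 = 2 * p 2 := eq_of_cos_eq_of_abs_sub_lt_abs_sin (hy2.trans hp2.symm) (by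
    rw [← mul_sub, abs_mul, abs_two]
    linarith [hclose 2])
  rw [h1, h2, mul_assoc] at hy0
  rw [mul_assoc] at hp0
  have hK : sin (p 1) * sin (2 * p 2) ≠ 0 :=
    mul_ne_zero (abs_pos.1 (by linarith)) (abs_pos.1 (by linarith))
  have h0 : y 0 = p 0 :=
    eq_of_cos_mul_eq_neg_abs hK hy0 hp0 ((hclose 0).trans (by linarith [pi_gt_three]))
  ext i
  fin_cases i
  · exact h0
  · exact h1
  · exact mul_left_cancel₀ two_ne_zero h2

theorem hessian_eq_of_hasFDerivAt {n : ℕ} {f : (Fin n → ℝ) → ℝ} {g : (Fin n → ℝ) → Fin n → ℝ}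
    {p : Fin n → ℝ} {H : Matrix (Fin n) (Fin n) ℝ}
    (hf : ∀ y, HasFDerivAt f (∑ j, g y j • (ContinuousLinearMap.proj j : (Fin n → ℝ) →L[ℝ] ℝ)) y)
    (hg : ∀ j, HasFDerivAt (fun y => g y j)
      (∑ i, H i j • (ContinuousLinearMap.proj i : (Fin n → ℝ) →L[ℝ] ℝ)) p) :
    hessian f p = H := by
  have hpartial (j : Fin n) : (fun y => fderiv ℝ f y (Pi.single j 1)) = fun y => g y j := by
    funext y
    simp [(hf y).fderiv, Pi.single_apply]
  ext i j
  simp [hessian, hpartial, (hg j).fderiv, Pi.single_apply]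

noncomputable def gradL1v (y : Fin 3 → ℝ) : Fin 3 → ℝ :=
  ![sin (y 0) * sin (y 1) * (1 - cos (y 1)) * sin (2 * y 2) / 4,
    cos (y 1) * sin (y 1) * (1 + 3 * cos (2 * y 2)) / 4
      - cos (y 0) * (cos (y 1) - cos (y 1) ^ 2 + sin (y 1) ^ 2) * sin (2 * y 2) / 4,
    -(1 - 3 * cos (y 1) ^ 2) * sin (2 * y 2) / 4
      - cos (y 0) * sin (y 1) * (1 - cos (y 1)) * cos (2 * y 2) / 2]

noncomputable def hessL1v (y : Fin 3 → ℝ) : Matrix (Fin 3) (Fin 3) ℝ :=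
  !![cos (y 0) * sin (y 1) * (1 - cos (y 1)) * sin (2 * y 2) / 4,
      sin (y 0) * (cos (y 1) - cos (y 1) ^ 2 + sin (y 1) ^ 2) * sin (2 * y 2) / 4,
      sin (y 0) * sin (y 1) * (1 - cos (y 1)) * cos (2 * y 2) / 2;
    sin (y 0) * (cos (y 1) - cos (y 1) ^ 2 + sin (y 1) ^ 2) * sin (2 * y 2) / 4,
      (cos (y 1) ^ 2 - sin (y 1) ^ 2) * (1 + 3 * cos (2 * y 2)) / 4
        - cos (y 0) * (4 * cos (y 1) - 1) * sin (y 1) * sin (2 * y 2) / 4,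
      -3 * cos (y 1) * sin (y 1) * sin (2 * y 2) / 2
        - cos (y 0) * (cos (y 1) - cos (y 1) ^ 2 + sin (y 1) ^ 2) * cos (2 * y 2) / 2;
    sin (y 0) * sin (y 1) * (1 - cos (y 1)) * cos (2 * y 2) / 2,
      -3 * cos (y 1) * sin (y 1) * sin (2 * y 2) / 2
        - cos (y 0) * (cos (y 1) - cos (y 1) ^ 2 + sin (y 1) ^ 2) * cos (2 * y 2) / 2,
      -(1 - 3 * cos (y 1) ^ 2) * cos (2 * y 2) / 2
        + cos (y 0) * sin (y 1) * (1 - cos (y 1)) * sin (2 * y 2)]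

theorem hasFDerivAt_L1v (y : Fin 3 → ℝ) :
    HasFDerivAt L1v (∑ j, gradL1v y j • (ContinuousLinearMap.proj j : (Fin 3 → ℝ) →L[ℝ] ℝ)) y := by
  have hC := (hasFDerivAt_apply (𝕜 := ℝ) 0 y).cos
  have hX := (hasFDerivAt_apply (𝕜 := ℝ) 1 y).cos
  have hS := (hasFDerivAt_apply (𝕜 := ℝ) 1 y).sin
  have hT := ((hasFDerivAt_apply (𝕜 := ℝ) 2 y).const_mul 2).cos
  have hU := ((hasFDerivAt_apply (𝕜 := ℝ) 2 y).const_mul 2).sin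
  have H := ((((hX.pow 2).const_sub 3).mul_const (1 / 8)).add
    ((((hX.pow 2).const_mul 3).const_sub 1).mul_const (1 / 8) |>.mul hT)).sub
    ((((hC.mul hS).mul (hX.const_sub 1)).mul hU).mul_const (1 / 4))
  refine (H.congr_fderiv ?_).congr_of_eventuallyEq (.of_forall fun z => ?_)
  · ext v
    simp only [Fin.sum_univ_three, _root_.add_apply, _root_.sub_apply, _root_.neg_apply,
      _root_.smul_apply, ContinuousLinearMap.proj_apply, smul_eq_mul, nsmul_eq_mul, Pi.mul_apply,
      Nat.cast_ofNat, gradL1v, cons_val_zero, cons_val_one, cons_val]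
    ring
  · simp only [L1v_eq_L1Poly, L1Poly, Pi.add_apply, Pi.sub_apply, Pi.mul_apply]
    ring

theorem hasFDerivAt_gradL1v (p : Fin 3 → ℝ) (j : Fin 3) :
    HasFDerivAt (fun y => gradL1v y j)
      (∑ i, hessL1v p i j • (ContinuousLinearMap.proj i : (Fin 3 → ℝ) →L[ℝ] ℝ)) p := by
  have hC := (hasFDerivAt_apply (𝕜 := ℝ) 0 p).cos
  have hSa := (hasFDerivAt_apply (𝕜 := ℝ) 0 p).sin
  have hX := (hasFDerivAt_apply (𝕜 := ℝ) 1 p).cos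
  have hS := (hasFDerivAt_apply (𝕜 := ℝ) 1 p).sin
  have hT := ((hasFDerivAt_apply (𝕜 := ℝ) 2 p).const_mul 2).cos
  have hU := ((hasFDerivAt_apply (𝕜 := ℝ) 2 p).const_mul 2).sin
  fin_cases j
  · have H := (((hSa.mul hS).mul (hX.const_sub 1)).mul hU).mul_const (1 / 4)
    refine (H.congr_fderiv ?_).congr_of_eventuallyEq (.of_forall fun z => ?_)
    · ext v
      simp only [Fin.sum_univ_three, _root_.add_apply, _root_.neg_apply, _root_.smul_apply,
        ContinuousLinearMap.proj_apply, smul_eq_mul, Pi.mul_apply, Fin.zero_eta, hessL1v, of_apply,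
        cons_val', cons_val_zero, cons_val_one, cons_val, cons_val_fin_one]
      ring
    · simp only [gradL1v, Fin.zero_eta, cons_val_zero, Pi.mul_apply]
      ring
  · have H := (((hX.mul hS).mul ((hT.const_mul 3).const_add 1)).mul_const (1 / 4)).sub
      (((hC.mul ((hX.sub (hX.pow 2)).add (hS.pow 2))).mul hU).mul_const (1 / 4))
    refine (H.congr_fderiv ?_).congr_of_eventuallyEq (.of_forall fun z => ?_)
    · ext v
      simp only [Fin.sum_univ_three, _root_.add_apply, _root_.sub_apply, _root_.smul_apply,
        ContinuousLinearMap.proj_apply, smul_eq_mul, nsmul_eq_mul, Pi.mul_apply, Pi.add_apply,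
        Pi.sub_apply, Nat.cast_ofNat, Fin.mk_one, hessL1v, of_apply, cons_val', cons_val_zero,
        cons_val_one, cons_val, cons_val_fin_one]
      ring
    · simp only [gradL1v, Fin.mk_one, cons_val_one, cons_val_zero, Pi.mul_apply, Pi.add_apply,
        Pi.sub_apply]
      ring
  · have H := ((((hX.pow 2).const_mul 3).const_sub 1).neg.mul hU |>.mul_const (1 / 4)).sub
      ((((hC.mul hS).mul (hX.const_sub 1)).mul hT).mul_const (1 / 2))
    refine (H.congr_fderiv ?_).congr_of_eventuallyEq (.of_forall fun z => ?_)
    · ext v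
      simp only [Fin.sum_univ_three, _root_.add_apply, _root_.sub_apply, _root_.neg_apply,
        _root_.smul_apply, ContinuousLinearMap.proj_apply, smul_eq_mul, nsmul_eq_mul, Pi.mul_apply,
        Pi.neg_apply, Nat.cast_ofNat, Fin.reduceFinMk, hessL1v, of_apply, cons_val', cons_val_zero,
        cons_val_one, cons_val, cons_val_fin_one]
      ring
    · simp only [gradL1v, Fin.reduceFinMk, cons_val, Pi.mul_apply, Pi.neg_apply, Pi.sub_apply]
      ring

theorem hessian_L1v (p : Fin 3 → ℝ) : hessian L1v p = hessL1v p :=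
  hessian_eq_of_hasFDerivAt hasFDerivAt_L1v (hasFDerivAt_gradL1v p)

theorem dotProduct_mulVec_neg_of_blocks {a b c d : ℝ} (ha : a < 0) (hb : b < 0)
    (hbd : c ^ 2 < b * d) {v : Fin 3 → ℝ} (hv : v ≠ 0) :
    v ⬝ᵥ (!![a, 0, 0; 0, b, c; 0, c, d] *ᵥ v) < 0 := by
  have hexp : v ⬝ᵥ (!![a, 0, 0; 0, b, c; 0, c, d] *ᵥ v) =
      a * v 0 ^ 2 + (b * v 1 ^ 2 + 2 * c * v 1 * v 2 + d * v 2 ^ 2) := by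
    simp only [dotProduct, mulVec, of_apply, cons_val', cons_val_fin_one, Fin.sum_univ_three,
      cons_val_zero, cons_val_one, cons_val, zero_mul, add_zero, zero_add]
    ring
  have hblock : b * (b * v 1 ^ 2 + 2 * c * v 1 * v 2 + d * v 2 ^ 2) =
      (b * v 1 + c * v 2) ^ 2 + (b * d - c ^ 2) * v 2 ^ 2 := by ring
  have h0 : a * v 0 ^ 2 ≤ 0 := mul_nonpos_of_nonpos_of_nonneg ha.le (sq_nonneg _)
  rw [hexp]
  by_cases h2 : v 2 = 0
  · by_cases h1 : v 1 = 0
    · have hv0 : v 0 ≠ 0 := fun hv0 => hv (by ext i; fin_cases i <;> assumption)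
      simpa [h1, h2] using mul_neg_of_neg_of_pos ha (sq_pos_of_ne_zero hv0)
    · simp only [h2]
      linarith [mul_neg_of_neg_of_pos hb (sq_pos_of_ne_zero h1)]
  · have : 0 < b * (b * v 1 ^ 2 + 2 * c * v 1 * v 2 + d * v 2 ^ 2) := by
      rw [hblock]
      exact add_pos_of_nonneg_of_pos (sq_nonneg _) (mul_pos (sub_pos.2 hbd) (sq_pos_of_ne_zero h2))
    linarith [neg_of_mul_pos_right this hb.le]

theorem trig_coords_of_eq_or_eq {p : Fin 3 → ℝ}
    (hp : p = ![π, arccos ((1 - √6) / 5), (1 / 2) * arccos (1 / (1 + √6))]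
      ∨ p = ![0, arccos ((1 - √6) / 5), π - (1 / 2) * arccos (1 / (1 + √6))]) :
    ∃ σ : ℝ, σ ^ 2 = 1 ∧ cos (p 0) = -σ ∧ sin (p 0) = 0 ∧ cos (p 1) = (1 - √6) / 5 ∧
      cos (2 * p 2) = (√6 - 1) / 5 ∧ sin (2 * p 2) = σ * sin (p 1) := by
  have hr := two_le_sqrt_six
  have hr' := sqrt_six_le_three
  have hθ : cos (arccos (1 / (1 + √6))) = (√6 - 1) / 5 := by
    rw [one_div_one_add_sqrt_six, cos_arccos (by linarith) (by linarith)]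
  have h1 : cos (arccos ((1 - √6) / 5)) = (1 - √6) / 5 := cos_arccos (by linarith) (by linarith)
  have hsin : sin (arccos (1 / (1 + √6))) = sin (arccos ((1 - √6) / 5)) := by
    rw [sin_arccos, sin_arccos, one_div_one_add_sqrt_six]; ring_nf
  rcases hp with rfl | rfl
  · refine ⟨1, by norm_num, by simp, by simp, by simpa using h1, ?_, ?_⟩
    · simpa using hθ
    · simpa using hsin
  · have e : 2 * (π - 1 / 2 * arccos (1 / (1 + √6))) = 2 * π - arccos (1 / (1 + √6)) := by ring
    refine ⟨-1, by norm_num, by simp, by simp, by simpa using h1, ?_, ?_⟩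
    · show cos (2 * (π - 1 / 2 * arccos (1 / (1 + √6)))) = _
      rw [e, cos_two_pi_sub, hθ]
    · show sin (2 * (π - 1 / 2 * arccos (1 / (1 + √6)))) = _
      rw [e, sin_two_pi_sub, hsin]; simp

theorem hessL1v_eq_of_trig_coords {p : Fin 3 → ℝ} {σ : ℝ} (hσ : σ ^ 2 = 1)
    (h0c : cos (p 0) = -σ) (h0s : sin (p 0) = 0) (h1c : cos (p 1) = (1 - √6) / 5)
    (h2c : cos (2 * p 2) = (√6 - 1) / 5) (h2s : sin (2 * p 2) = σ * sin (p 1)) :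
    hessL1v p = !![-(42 + 13 * √6) / 250, 0, 0;
      0, -(32 + 23 * √6) / 100, σ * (13 * √6 - 8) / 50;
      0, σ * (13 * √6 - 8) / 50, -(4 + √6) / 5] := by
  have hr := sqrt_six_sq
  have hs : sin (p 1) ^ 2 = (18 + 2 * √6) / 25 := by
    rw [sin_sq, h1c]; linear_combination (-1 / 25) * hr
  rw [hessL1v, h0c, h0s, h1c, h2c, h2s]
  ext i j
  fin_cases i <;> fin_cases j <;>
    simp only [of_apply, cons_val', cons_val_zero, cons_val_one, cons_val, cons_val_fin_one,
      Fin.zero_eta, Fin.mk_one, Fin.reduceFinMk, zero_mul, zero_div]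
  · linear_combination (-(4 + √6) / 20 * sin (p 1) ^ 2) * hσ - (4 + √6) / 20 * hs - 1 / 250 * hr
  · linear_combination ((4 * ((1 - √6) / 5) - 1) * sin (p 1) ^ 2 / 4) * hσ
      + (4 * ((1 - √6) / 5) - 2 - 3 * ((√6 - 1) / 5)) / 4 * hs + (3 * √6 / 500 - 9 / 250) * hr
  · linear_combination σ * ((√6 - 1) / 5 - 3 * ((1 - √6) / 5)) / 2 * hs
      + σ * (3 / 125 - √6 / 250) * hr
  · linear_combination σ * ((√6 - 1) / 5 - 3 * ((1 - √6) / 5)) / 2 * hs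
      + σ * (3 / 125 - √6 / 250) * hr
  · linear_combination (-(sin (p 1) ^ 2) * (1 - (1 - √6) / 5)) * hσ - (1 - (1 - √6) / 5) * hs
      + (3 * √6 - 13) / 250 * hr

theorem L1v_eq_max_of_trig_coords {p : Fin 3 → ℝ} {σ : ℝ} (hσ : σ ^ 2 = 1)
    (h0c : cos (p 0) = -σ) (h1c : cos (p 1) = (1 - √6) / 5)
    (h2c : cos (2 * p 2) = (√6 - 1) / 5) (h2s : sin (2 * p 2) = σ * sin (p 1)) :
    L1v p = 3 / 50 * (9 + √6) := by
  refine (L1v_eq_max_iff p).2 ⟨h1c, h2c, ?_⟩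
  have hσ1 : |σ| = 1 := by rcases sq_eq_one_iff.1 hσ with rfl | rfl <;> simp
  rw [h0c, h2s, abs_mul, abs_mul, hσ1, one_mul, abs_mul_abs_self]
  linear_combination (-sin (p 1) ^ 2) * hσ

theorem dotProduct_hessian_L1v_neg_of_trig_coords {p : Fin 3 → ℝ} {σ : ℝ} (hσ : σ ^ 2 = 1)
    (h0c : cos (p 0) = -σ) (h0s : sin (p 0) = 0) (h1c : cos (p 1) = (1 - √6) / 5)
    (h2c : cos (2 * p 2) = (√6 - 1) / 5) (h2s : sin (2 * p 2) = σ * sin (p 1))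
    {v : Fin 3 → ℝ} (hv : v ≠ 0) : v ⬝ᵥ (hessian L1v p *ᵥ v) < 0 := by
  have hr := two_le_sqrt_six
  rw [hessian_L1v, hessL1v_eq_of_trig_coords hσ h0c h0s h1c h2c h2s]
  refine dotProduct_mulVec_neg_of_blocks (by linarith) (by linarith) ?_ hv
  rw [div_pow, mul_pow, hσ, one_mul]
  nlinarith [sqrt_six_sq]

open Real in
/-- at the two listed points the gradient of `L₁` vanishes,
`L₁ = (3/50)·(9+√6)`, and the Hessian is negative definite; hence these points
are strict local (in fact global) maxima of `L₁`. -/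
theorem stmt9 (p : Fin 3 → ℝ)
    (hp : p = ![π, arccos ((1 - Real.sqrt 6)/5), (1/2) * arccos (1/(1 + Real.sqrt 6))]
      ∨ p = ![0, arccos ((1 - Real.sqrt 6)/5), π - (1/2) * arccos (1/(1 + Real.sqrt 6))]) :
    -- the gradient of L₁ vanishes at p
    fderiv ℝ L1v p = 0
    -- L₁ takes the value (3/50)·(9+√6) at p
    ∧ L1v p = (3/50) * (9 + Real.sqrt 6)
    -- the Hessian is negative definite
    ∧ (∀ v : Fin 3 → ℝ, v ≠ 0 → v ⬝ᵥ (hessian L1v p).mulVec v < 0)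
    -- hence p is a strict local maximum
    ∧ (∃ ε > (0:ℝ), ∀ y : Fin 3 → ℝ, y ≠ p → dist y p < ε → L1v y < L1v p)
    -- and in fact a global maximum
    ∧ (∀ y : Fin 3 → ℝ, L1v y ≤ L1v p) := by
  obtain ⟨σ, hσ, h0c, h0s, h1c, h2c, h2s⟩ := trig_coords_of_eq_or_eq hp
  have hmax := L1v_eq_max_of_trig_coords hσ h0c h1c h2c h2s
  have hglob (y : Fin 3 → ℝ) : L1v y ≤ L1v p := hmax ▸ L1v_le y
  refine ⟨IsLocalMax.fderiv_eq_zero (.of_forall hglob), hmax,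
    fun v hv => dotProduct_hessian_L1v_neg_of_trig_coords hσ h0c h0s h1c h2c h2s hv,
    ⟨1 / 5, by norm_num, fun y hne hdist => ?_⟩, hglob⟩
  exact (hglob y).lt_of_ne fun h => hne (eq_of_L1v_eq_max_of_dist_lt (h.trans hmax) hmax hdist)
end
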